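/- Let H be a ℤ-graded Hopf algebra over a field k satisfying the twisting conditions, and let (τ, μ) be a twisting pair of H. Let σ, σ' : H × H → k be the bilinear maps determined by σ(x, y) = ε(x)·ε(τ_n(y)) and σ'(x, y) = ε(x)·ε(μ_n(y)) for all n ∈ ℤ, homogeneous x ∈ H_n, and y ∈ H. Then for every n ∈ ℤ, every homogeneous x ∈ H_n, and every y ∈ H: Σ σ'(x_1, y_1)·x_2·y_2·σ(x_3, y_3) = x·τ_n(μ_n(y)); that is, the 2-cocycle-twisted product on H coincides with the Zhang twist product of H by the twisting system {τ_i∘μ_i}_{i∈ℤ}. -/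

import Mathlib

/-!
Write `Δ²z = (Δ ⊗ id) Δ z`. The twisted product `Σ σ'(x₁, y₁) x₂ y₂ σ(x₃, y₃)` is a bilinear
expression in `Δ²x` and `Δ²y`, so it does not depend on the Sweedler representations chosen.
Since `Δ(H_n) ⊆ H_n ⊗ H_n`, `Δ²x` is a sum of tensors `(a ⊗ b) ⊗ c` with `a, c ∈ H_n`, on which
`σ'` and `σ` factor through the counit; the `x`-side then collapses to `ε(x₁) x₂ ε(x₃) = x`,
while the `y`-side becomes `Σ ε(μ_n y₁) y₂ ε(τ_n y₃)`. Condition (P1) says that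
`(μ_n ⊗ id) ⊗ τ_n` maps `Δ²y` to `Δ²(τ_n μ_n y)`, so the `y`-side collapses to `τ_n μ_n y`.
-/

open TensorProduct

/-- A twisting system of a ℤ-graded algebra. -/
def IsTwistingSystem {k A : Type*} [CommSemiring k] [Semiring A] [Algebra k A]
    (𝒜 : ℤ → Submodule k A) (τ : ℤ → (A →ₗ[k] A)) : Prop :=
  (∀ i : ℤ, Function.Bijective (τ i)) ∧
  (∀ (i n : ℤ), ∀ a ∈ 𝒜 n, τ i a ∈ 𝒜 n) ∧
  (τ 0 = LinearMap.id) ∧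
  (∀ i : ℤ, τ i 1 = 1) ∧
  (∀ (i j : ℤ), ∀ a ∈ 𝒜 j, ∀ b : A, τ i (a * τ j b) = τ i a * τ (i + j) b)

open Coalgebra (comul counit)
open TensorProduct (map)

section IteratedComul

variable (R : Type*) {A : Type*} [CommSemiring R] [AddCommMonoid A] [Module R A]

noncomputable def outerCounit [CoalgebraStruct R A] : (A ⊗[R] A) ⊗[R] A →ₗ[R] A :=
  (TensorProduct.rid R A).toLinearMap ∘ₗ map ((TensorProduct.lid R A).toLinearMap ∘ₗ
    counit.rTensor A) counit

variable {R}

@[simp]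
lemma outerCounit_tmul [CoalgebraStruct R A] (a b c : A) :
    outerCounit R ((a ⊗ₜ[R] b) ⊗ₜ[R] c) = counit (R := R) c • counit (R := R) a • b := by
  simp [outerCounit]

lemma map_map_rTensor_comul_comul [CoalgebraStruct R A] {f g : A →ₗ[R] A}
    (hf : comul ∘ₗ f = map f .id ∘ₗ comul) (hg : comul ∘ₗ g = map .id g ∘ₗ comul) (y : A) :
    map (map f .id) g (comul.rTensor A (comul y)) = comul.rTensor A (comul (R := R) (g (f y))) := by
  have hcomul : comul (R := R) (g (f y)) = map f g (comul y) := by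
    rw [← LinearMap.comp_apply comul g, hg, LinearMap.comp_apply, ← LinearMap.comp_apply comul f,
      hf, LinearMap.comp_apply, TensorProduct.map_map, LinearMap.id_comp, LinearMap.comp_id]
  have hcomm : comul.rTensor A ∘ₗ map f g = map (map f .id) g ∘ₗ comul.rTensor A := by
    rw [LinearMap.rTensor_comp_map, hf, LinearMap.map_comp_rTensor]
  rw [hcomul, ← LinearMap.comp_apply _ (map f g), hcomm, LinearMap.comp_apply]

variable [Coalgebra R A]

lemma outerCounit_rTensor_comul_comul (x : A) :
    outerCounit R (comul.rTensor A (comul (R := R) x)) = x := by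
  have hcounit : (TensorProduct.lid R A).toLinearMap ∘ₗ counit.rTensor A ∘ₗ comul =
      LinearMap.id := by
    ext; simp
  rw [outerCounit, LinearMap.comp_apply, ← LinearMap.comp_apply (map _ _),
    LinearMap.map_comp_rTensor, LinearMap.comp_assoc, hcounit]
  change TensorProduct.rid R A (counit.lTensor A (comul x)) = x
  simp

lemma rTensor_comul_comul_eq_sum {x : A} {ι κ : Type*} {s : Finset ι} {x₁ x₂ : ι → A}
    {t : ι → Finset κ} {x₁₁ x₁₂ : ι → κ → A}
    (hx : comul (R := R) x = ∑ i ∈ s, x₁ i ⊗ₜ[R] x₂ i)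
    (hx₁ : ∀ i ∈ s, comul (R := R) (x₁ i) = ∑ p ∈ t i, x₁₁ i p ⊗ₜ[R] x₁₂ i p) :
    comul.rTensor A (comul (R := R) x) =
      ∑ i ∈ s, ∑ p ∈ t i, (x₁₁ i p ⊗ₜ[R] x₁₂ i p) ⊗ₜ[R] x₂ i := by
  rw [hx, map_sum]
  refine Finset.sum_congr rfl fun i hi => ?_
  rw [LinearMap.rTensor_tmul, hx₁ i hi, sum_tmul]

variable {P : Submodule R A}

lemma rTensor_comul_comul_mem_range
    (hP : ∀ b ∈ P, comul (R := R) b ∈ LinearMap.range (mapIncl P P)) {x : A} (hx : x ∈ P) :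
    comul.rTensor A (comul (R := R) x) ∈ LinearMap.range (map (mapIncl P P) P.subtype) := by
  obtain ⟨t, ht⟩ := hP x hx
  rw [← ht]
  clear ht
  induction t using TensorProduct.induction_on with
  | zero => simp
  | tmul a c =>
    obtain ⟨u, hu⟩ := hP a a.2
    exact ⟨u ⊗ₜ c, by simp [hu]⟩
  | add t₁ t₂ h₁ h₂ => simpa only [map_add] using add_mem h₁ h₂

lemma apply_rTensor_comul_comul_eq {M : Type*} [AddCommMonoid M] [Module R M]
    (hP : ∀ b ∈ P, comul (R := R) b ∈ LinearMap.range (mapIncl P P))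
    {Φ Ψ : (A ⊗[R] A) ⊗[R] A →ₗ[R] M}
    (h : ∀ a ∈ P, ∀ b ∈ P, ∀ c ∈ P, Φ ((a ⊗ₜ b) ⊗ₜ c) = Ψ ((a ⊗ₜ b) ⊗ₜ c)) {x : A} (hx : x ∈ P) :
    Φ (comul.rTensor A (comul x)) = Ψ (comul.rTensor A (comul x)) := by
  obtain ⟨t, ht⟩ := rTensor_comul_comul_mem_range hP hx
  have hext : Φ ∘ₗ map (mapIncl P P) P.subtype = Ψ ∘ₗ map (mapIncl P P) P.subtype :=
    ext_threefold fun a b c => by simpa using h _ a.2 _ b.2 _ c.2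
  rw [← ht]
  exact LinearMap.congr_fun hext t

end IteratedComul

section CocycleTwist

variable {k H : Type*} [CommSemiring k] [Semiring H] [Algebra k H]

/-- The twisted product of the paper is `x ·_σ y = cocycleTwist σ σ' (Δ²x ⊗ Δ²y)`. -/
noncomputable def cocycleTwist (σ σ' : H →ₗ[k] H →ₗ[k] k) :
    ((H ⊗[k] H) ⊗[k] H) ⊗[k] ((H ⊗[k] H) ⊗[k] H) →ₗ[k] H :=
  (TensorProduct.rid k H).toLinearMap ∘ₗ
    map ((TensorProduct.lid k H).toLinearMap ∘ₗ map (lift σ') (LinearMap.mul' k H)) (lift σ) ∘ₗ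
    (tensorTensorTensorComm k H H H H).toLinearMap.rTensor (H ⊗[k] H) ∘ₗ
    (tensorTensorTensorComm k (H ⊗[k] H) H (H ⊗[k] H) H).toLinearMap

@[simp]
lemma cocycleTwist_tmul (σ σ' : H →ₗ[k] H →ₗ[k] k) (a b c d e f : H) :
    cocycleTwist σ σ' (((a ⊗ₜ b) ⊗ₜ c) ⊗ₜ ((d ⊗ₜ e) ⊗ₜ f)) = (σ' a d * σ c f) • (b * e) := by
  simp [cocycleTwist, mul_smul, smul_comm (σ c f)]

lemma cocycleTwist_sum_tmul_sum (σ σ' : H →ₗ[k] H →ₗ[k] k) {ι ι' κ κ' : Type*}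
    {s : Finset ι} {t : Finset κ} {s' : ι → Finset ι'} {t' : κ → Finset κ'}
    (a b : ι → ι' → H) (c : ι → H) (d e : κ → κ' → H) (f : κ → H) :
    cocycleTwist σ σ' ((∑ i ∈ s, ∑ p ∈ s' i, (a i p ⊗ₜ b i p) ⊗ₜ c i) ⊗ₜ
        (∑ j ∈ t, ∑ q ∈ t' j, (d j q ⊗ₜ e j q) ⊗ₜ f j)) =
      ∑ i ∈ s, ∑ j ∈ t, ∑ p ∈ s' i, ∑ q ∈ t' j,
        (σ' (a i p) (d j q) * σ (c i) (f j)) • (b i p * e j q) := by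
  simp only [sum_tmul, map_sum]
  simp only [tmul_sum, map_sum, cocycleTwist_tmul]
  exact Finset.sum_congr rfl fun i _ => Finset.sum_comm (β := H)

variable [Coalgebra k H] {P : Submodule k H} {σ σ' : H →ₗ[k] H →ₗ[k] k} {τ μ : H →ₗ[k] H}

lemma cocycleTwist_tmul_of_mem
    (hσ : ∀ x ∈ P, ∀ y, σ x y = counit (R := k) x * counit (R := k) (τ y))
    (hσ' : ∀ x ∈ P, ∀ y, σ' x y = counit (R := k) x * counit (R := k) (μ y))
    {a c : H} (ha : a ∈ P) (hc : c ∈ P) (b : H) (Y : (H ⊗[k] H) ⊗[k] H) :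
    cocycleTwist σ σ' (((a ⊗ₜ b) ⊗ₜ c) ⊗ₜ Y) =
      (counit (R := k) a * counit (R := k) c) • (b * outerCounit k (map (map μ .id) τ Y)) := by
  induction Y using TensorProduct.induction_on with
  | zero => simp
  | tmul X f =>
    induction X using TensorProduct.induction_on with
    | zero => simp
    | tmul d e =>
      simp only [cocycleTwist_tmul, hσ c hc, hσ' a ha, TensorProduct.map_tmul, outerCounit_tmul,
        LinearMap.id_apply, mul_smul_comm, smul_smul]
      ring_nf
    | add X₁ X₂ h₁ h₂ => simp only [add_tmul, tmul_add, map_add, h₁, h₂, mul_add, smul_add]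
  | add Y₁ Y₂ h₁ h₂ => simp only [tmul_add, map_add, h₁, h₂, mul_add, smul_add]

lemma cocycleTwist_rTensor_comul_comul_of_mem
    (hσ : ∀ x ∈ P, ∀ y, σ x y = counit (R := k) x * counit (R := k) (τ y))
    (hσ' : ∀ x ∈ P, ∀ y, σ' x y = counit (R := k) x * counit (R := k) (μ y))
    (hP : ∀ b ∈ P, comul (R := k) b ∈ LinearMap.range (mapIncl P P)) {x : H} (hx : x ∈ P)
    (Y : (H ⊗[k] H) ⊗[k] H) :
    cocycleTwist σ σ' (comul.rTensor H (comul (R := k) x) ⊗ₜ Y) =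
      x * outerCounit k (map (map μ .id) τ Y) := by
  have := apply_rTensor_comul_comul_eq hP (Φ := cocycleTwist σ σ' ∘ₗ (mk k _ _).flip Y)
    (Ψ := LinearMap.mulRight k (outerCounit k (map (map μ .id) τ Y)) ∘ₗ outerCounit k)
    (fun a ha b _ c hc => by
      simp [cocycleTwist_tmul_of_mem hσ hσ' ha hc, smul_smul, mul_comm]) hx
  simpa only [LinearMap.comp_apply, LinearMap.flip_apply, mk_apply, LinearMap.mulRight_apply,
    outerCounit_rTensor_comul_comul] using this

end CocycleTwist

theorem statement13 {k H : Type*} [Field k] [Ring H] [HopfAlgebra k H]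
    (𝒜 : ℤ → Submodule k H)
    (hT2 : ∀ n : ℤ, ∀ b ∈ 𝒜 n,
      Coalgebra.comul (R := k) b ∈ LinearMap.range (TensorProduct.mapIncl (𝒜 n) (𝒜 n)))
    (τ μ : ℤ → (H →ₗ[k] H))
    (hP1τ : ∀ i : ℤ, Coalgebra.comul (R := k) ∘ₗ τ i =
      TensorProduct.map LinearMap.id (τ i) ∘ₗ Coalgebra.comul)
    (hP1μ : ∀ i : ℤ, Coalgebra.comul (R := k) ∘ₗ μ i =
      TensorProduct.map (μ i) LinearMap.id ∘ₗ Coalgebra.comul)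
    (σ σ' : H →ₗ[k] H →ₗ[k] k)
    (hσ : ∀ n : ℤ, ∀ x ∈ 𝒜 n, ∀ y : H,
      σ x y = Coalgebra.counit (R := k) x * Coalgebra.counit (R := k) (τ n y))
    (hσ' : ∀ n : ℤ, ∀ x ∈ 𝒜 n, ∀ y : H,
      σ' x y = Coalgebra.counit (R := k) x * Coalgebra.counit (R := k) (μ n y)) :
    ∀ n : ℤ, ∀ x ∈ 𝒜 n, ∀ y : H,
    ∀ (ιx ιy ιx' ιy' : Type) (sx : Finset ιx) (sy : Finset ιy)
      (x1 x2 : ιx → H) (y1 y2 : ιy → H)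
      (sx' : ιx → Finset ιx') (sy' : ιy → Finset ιy')
      (x11 x12 : ιx → ιx' → H) (y11 y12 : ιy → ιy' → H),
      Coalgebra.comul (R := k) x = ∑ i ∈ sx, x1 i ⊗ₜ[k] x2 i →
      Coalgebra.comul (R := k) y = ∑ j ∈ sy, y1 j ⊗ₜ[k] y2 j →
      (∀ i ∈ sx, Coalgebra.comul (R := k) (x1 i) = ∑ p ∈ sx' i, x11 i p ⊗ₜ[k] x12 i p) →
      (∀ j ∈ sy, Coalgebra.comul (R := k) (y1 j) = ∑ q ∈ sy' j, y11 j q ⊗ₜ[k] y12 j q) →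
      ∑ i ∈ sx, ∑ j ∈ sy, ∑ p ∈ sx' i, ∑ q ∈ sy' j,
        (σ' (x11 i p) (y11 j q) * σ (x2 i) (y2 j)) • (x12 i p * y12 j q) =
        x * τ n (μ n y) := by
  intro n x hx y _ _ _ _ sx sy x1 x2 y1 y2 sx' sy' x11 x12 y11 y12 hcx hcy hcx1 hcy1
  rw [← cocycleTwist_sum_tmul_sum, ← rTensor_comul_comul_eq_sum hcx hcx1,
    ← rTensor_comul_comul_eq_sum hcy hcy1,
    cocycleTwist_rTensor_comul_comul_of_mem (hσ n) (hσ' n) (hT2 n) hx,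
    map_map_rTensor_comul_comul (hP1μ n) (hP1τ n), outerCounit_rTensor_comul_comul]
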